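/- arXiv:2010.04347 — 3 statements merged into one kernel-verified Lean document; each statement's English description precedes it below -/
import Mathlib

section
/- Let α > 0 and β > 0, and define g(x) = (α^{1/β}/(αβ))·exp(α/x^β)·x^{1+β}·Γ(1 − 1/β; α/x^β) for x ∈ (0,1), where Γ(s; y) = ∫_y^∞ t^{s−1} e^{−t} dt. Suppose f is a positive, differentiable function on (0,1) with ∫_0^1 f(t) dt = 1 (with t·f(t) integrable near 0) such that for every x ∈ (0,1), ∫_0^x t·f(t) dt = g(x)·f(x). Then f(x) = αβ·exp(−α(x^{−β} − 1))/x^{1+β} for every x ∈ (0,1), i.e., f is the unit-Gompertz density with parameters α and β. -/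
/-!
Write `M x = ∫₀ˣ t f(t) dt` and let `M₀` be the same partial moment of the unit-Gompertz
density `f₀`; it is an upper incomplete gamma function in `α / x^β`, and `g = M₀ / f₀`.
The hypothesis says `M = g f`, so `M' M₀ = x f g f₀ = M M₀'`: the Wronskian of `M` and `M₀`
vanishes, `M = c M₀`, hence `f = c f₀` on `(0, 1)`, and `∫ f = ∫ f₀ = 1` forces `c = 1`.
-/

/-- The upper incomplete gamma function `Γ(s; y) = ∫_y^∞ t^(s-1) e^(-t) dt`. -/
noncomputable def uiGamma (s y : ℝ) : ℝ :=
  ∫ t in Set.Ioi y, t ^ (s - 1) * Real.exp (-t)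

open MeasureTheory Set Filter Topology Real

section UpperIncompleteGamma

variable {s y : ℝ}

lemma continuousOn_rpow_sub_one_mul_exp_neg (s : ℝ) :
    ContinuousOn (fun t : ℝ => t ^ (s - 1) * exp (-t)) (Ioi 0) := fun t ht =>
  ((continuousAt_rpow_const t _ (Or.inl ht.ne')).mul
    (continuous_exp.comp continuous_neg).continuousAt).continuousWithinAt

lemma integrableOn_rpow_sub_one_mul_exp_neg_Ioi (hy : 0 < y) :
    IntegrableOn (fun t : ℝ => t ^ (s - 1) * exp (-t)) (Ioi y) := by
  refine integrable_of_isBigO_exp_neg one_half_pos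
    ((continuousOn_rpow_sub_one_mul_exp_neg s).mono fun t ht => hy.trans_le ht) ?_
  refine ((isLittleO_rpow_exp_pos_mul_atTop (s - 1) one_half_pos).isBigO.mul
    (Asymptotics.isBigO_refl (fun t => exp (-t)) atTop)).congr_right fun t => ?_
  rw [← exp_add]
  ring_nf

lemma hasDerivAt_uiGamma (hy : 0 < y) :
    HasDerivAt (uiGamma s) (-(y ^ (s - 1) * exp (-y))) y := by
  have hcont := continuousOn_rpow_sub_one_mul_exp_neg s
  have hI : HasDerivAt (fun u => ∫ t in (1 : ℝ)..u, t ^ (s - 1) * exp (-t))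
      (y ^ (s - 1) * exp (-y)) y :=
    intervalIntegral.integral_hasDerivAt_right
      ((hcont.mono fun t ht => lt_of_lt_of_le (lt_min one_pos hy) ht.1).intervalIntegrable)
      (hcont.stronglyMeasurableAtFilter isOpen_Ioi y hy)
      (hcont.continuousAt (Ioi_mem_nhds hy))
  refine (hI.const_sub (uiGamma s 1)).congr_of_eventuallyEq ?_
  filter_upwards [Ioi_mem_nhds hy] with u hu
  rw [← intervalIntegral.integral_Ioi_sub_Ioi'
    (integrableOn_rpow_sub_one_mul_exp_neg_Ioi one_pos)
    (integrableOn_rpow_sub_one_mul_exp_neg_Ioi hu), uiGamma, uiGamma, sub_sub_cancel]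

lemma uiGamma_pos (hy : 0 < y) : 0 < uiGamma s y := by
  have hpos : ∀ t ∈ Ioi y, 0 < t ^ (s - 1) * exp (-t) := fun t ht => by
    have : 0 < t := hy.trans ht
    positivity
  rw [uiGamma, setIntegral_pos_iff_support_of_nonneg_ae
    ((ae_restrict_iff' measurableSet_Ioi).2 (ae_of_all _ fun t ht => (hpos t ht).le))
    (integrableOn_rpow_sub_one_mul_exp_neg_Ioi hy),
    inter_eq_right.2 fun t ht => Function.mem_support.2 (hpos t ht).ne']
  simp

end UpperIncompleteGamma

theorem intervalIntegral.integral_eq_sub_of_hasDerivAt_of_nonneg_of_tendsto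
    {F F' : ℝ → ℝ} {a b Fa : ℝ} (hab : a < b)
    (hderiv : ∀ x ∈ Ioc a b, HasDerivAt F (F' x) x) (hnonneg : ∀ x ∈ Ioo a b, 0 ≤ F' x)
    (ha : Tendsto F (𝓝[>] a) (𝓝 Fa)) :
    ∫ x in a..b, F' x = F b - Fa := by
  classical
  set H := Function.update F a Fa
  have hH : ∀ x ∈ Ioc a b, H =ᶠ[𝓝 x] F := fun x hx => by
    filter_upwards [Ioi_mem_nhds hx.1] with y hy using Function.update_of_ne hy.ne' _ _
  have hHderiv : ∀ x ∈ Ioo a b, HasDerivAt H (F' x) x := fun x hx =>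
    (hderiv x (Ioo_subset_Ioc_self hx)).congr_of_eventuallyEq (hH x (Ioo_subset_Ioc_self hx))
  have hHcont : ContinuousOn H (Icc a b) := by
    rw [continuousOn_update_iff, Icc_sdiff_left]
    exact ⟨fun x hx => (hderiv x hx).continuousAt.continuousWithinAt,
      fun _ => ha.mono_left (nhdsWithin_mono _ Ioc_subset_Ioi_self)⟩
  have hint : IntervalIntegrable F' volume a b :=
    (intervalIntegrable_iff_integrableOn_Ioc_of_le hab.le).2
      (integrableOn_deriv_of_nonneg hHcont hHderiv hnonneg)
  simpa [H, hab.ne'] using integral_eq_sub_of_hasDerivAt_of_le hab.le hHcont hHderiv hint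

noncomputable def unitGompertzPDF (α β x : ℝ) : ℝ :=
  α * β * exp (-α * (x ^ (-β) - 1)) / x ^ (1 + β)

noncomputable def unitGompertzCDF (α β x : ℝ) : ℝ :=
  exp (-α * (x ^ (-β) - 1))

/-- `∫₀ˣ t · unitGompertzPDF α β t dt`, after the substitution `u = α / t ^ β`. -/
noncomputable def unitGompertzPartialMoment (α β x : ℝ) : ℝ :=
  α ^ (1 / β) * exp α * uiGamma (1 - 1 / β) (α / x ^ β)

section UnitGompertz

variable {α β x : ℝ}

lemma unitGompertzPDF_nonneg (hα : 0 ≤ α) (hβ : 0 ≤ β) (hx : 0 ≤ x) :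
    0 ≤ unitGompertzPDF α β x := by
  unfold unitGompertzPDF
  positivity

lemma unitGompertzCDF_eq_exp_mul_exp (hx : 0 ≤ x) :
    unitGompertzCDF α β x = exp α * exp (-(α / x ^ β)) := by
  rw [unitGompertzCDF, rpow_neg hx, ← exp_add]
  ring_nf

lemma hasDerivAt_unitGompertzCDF (hx : 0 < x) :
    HasDerivAt (unitGompertzCDF α β) (unitGompertzPDF α β x) x := by
  have h := (((hasDerivAt_rpow_const (p := -β) (Or.inl hx.ne')).sub_const 1).const_mul (-α)).exp
  refine h.congr_deriv ?_
  rw [unitGompertzPDF, show -β - 1 = -(1 + β) by ring, rpow_neg hx.le (1 + β)]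
  field_simp

lemma tendsto_unitGompertzCDF_zero (hα : 0 < α) (hβ : 0 < β) :
    Tendsto (unitGompertzCDF α β) (𝓝[>] 0) (𝓝 0) := by
  have h := (tendsto_atTop_add_const_right _ (-1)
    (tendsto_rpow_neg_nhdsGT_zero (neg_lt_zero.2 hβ))).const_mul_atTop_of_neg (neg_lt_zero.2 hα)
  refine (tendsto_exp_atBot.comp h).congr fun u => ?_
  simp [unitGompertzCDF, sub_eq_add_neg]

lemma integral_unitGompertzPDF (hα : 0 < α) (hβ : 0 < β) :
    ∫ x in (0 : ℝ)..1, unitGompertzPDF α β x = 1 := by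
  rw [intervalIntegral.integral_eq_sub_of_hasDerivAt_of_nonneg_of_tendsto one_pos
    (fun x hx => hasDerivAt_unitGompertzCDF hx.1)
    (fun x hx => unitGompertzPDF_nonneg hα.le hβ.le hx.1.le)
    (tendsto_unitGompertzCDF_zero hα hβ)]
  simp [unitGompertzCDF]

lemma unitGompertzPartialMoment_pos (hα : 0 < α) (hx : 0 < x) :
    0 < unitGompertzPartialMoment α β x :=
  mul_pos (by positivity) (uiGamma_pos (by positivity))

lemma hasDerivAt_unitGompertzPartialMoment (hα : 0 < α) (hβ : β ≠ 0) (hx : 0 < x) :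
    HasDerivAt (unitGompertzPartialMoment α β) (x * unitGompertzPDF α β x) x := by
  have hinner : HasDerivAt (fun u => α / u ^ β) (-(α * β) / x ^ (1 + β)) x := by
    refine (((hasDerivAt_rpow_const (p := -β) (Or.inl hx.ne')).const_mul α).congr_of_eventuallyEq
      ?_).congr_deriv ?_
    · filter_upwards [Ioi_mem_nhds hx] with u hu
      rw [rpow_neg hu.le, div_eq_mul_inv]
    · rw [show -β - 1 = -(1 + β) by ring, rpow_neg hx.le]
      ring
  have hroot : (α / x ^ β) ^ (1 - 1 / β - 1) = x / α ^ (1 / β) := by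
    rw [show 1 - 1 / β - 1 = -(1 / β) by ring, rpow_neg (by positivity),
      div_rpow hα.le (by positivity), one_div, rpow_rpow_inv hx.le hβ, inv_div]
  have h := ((hasDerivAt_uiGamma (s := 1 - 1 / β) (by positivity)).comp x hinner).const_mul
    (α ^ (1 / β) * exp α)
  refine h.congr_deriv ?_
  rw [unitGompertzPDF, ← unitGompertzCDF, unitGompertzCDF_eq_exp_mul_exp hx.le, hroot]
  field_simp

lemma mul_unitGompertzPDF_eq_partialMoment (hα : α ≠ 0) (hβ : β ≠ 0) (hx : 0 < x) :
    α ^ (1 / β) / (α * β) * exp (α / x ^ β) * x ^ (1 + β) *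
      uiGamma (1 - 1 / β) (α / x ^ β) * unitGompertzPDF α β x =
      unitGompertzPartialMoment α β x := by
  rw [unitGompertzPDF, ← unitGompertzCDF, unitGompertzCDF_eq_exp_mul_exp hx.le,
    unitGompertzPartialMoment, exp_neg]
  field_simp

end UnitGompertz

theorem IsOpen.exists_eq_const_mul_of_deriv_mul_eq {𝕜 : Type*} [RCLike 𝕜] {s : Set 𝕜}
    (hs : IsOpen s) (hs' : IsPreconnected s) {F G F' G' : 𝕜 → 𝕜}
    (hF : ∀ x ∈ s, HasDerivAt F (F' x) x) (hG : ∀ x ∈ s, HasDerivAt G (G' x) x)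
    (hG₀ : ∀ x ∈ s, G x ≠ 0) (hW : ∀ x ∈ s, F' x * G x = F x * G' x) :
    ∃ c, ∀ x ∈ s, F x = c * G x := by
  have hquot : ∀ x ∈ s, HasDerivAt (F / G) 0 x := fun x hx => by
    simpa [hW x hx] using (hF x hx).div (hG x hx) (hG₀ x hx)
  obtain ⟨c, hc⟩ := hs.exists_is_const_of_deriv_eq_zero hs'
    (fun x hx => (hquot x hx).differentiableAt.differentiableWithinAt)
    (fun x hx => (hquot x hx).deriv)
  exact ⟨c, fun x hx => (div_eq_iff (hG₀ x hx)).1 (hc x hx)⟩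

theorem unitGompertz_characterization_left_general (α β : ℝ) (hα : 0 < α) (hβ : 0 < β)
    (g f : ℝ → ℝ)
    (hg : g = fun x => α ^ (1 / β) / (α * β) * Real.exp (α / x ^ β) * x ^ (1 + β) *
      uiGamma (1 - 1 / β) (α / x ^ β))
    (hf_diff : ∀ x ∈ Set.Ioo (0:ℝ) 1, DifferentiableAt ℝ f x)
    (hf_int : (∫ t in (0:ℝ)..1, f t) = 1)
    (hint : ∀ x ∈ Set.Ioo (0:ℝ) 1,
      IntervalIntegrable (fun t => t * f t) MeasureTheory.volume 0 x)
    (hid : ∀ x ∈ Set.Ioo (0:ℝ) 1, (∫ t in (0:ℝ)..x, t * f t) = g x * f x) :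
    ∀ x ∈ Set.Ioo (0:ℝ) 1,
      f x = α * β * Real.exp (-α * (x ^ (-β) - 1)) / x ^ (1 + β) := by
  have hgM : ∀ x ∈ Ioo (0 : ℝ) 1,
      g x * unitGompertzPDF α β x = unitGompertzPartialMoment α β x := fun x hx =>
    hg ▸ mul_unitGompertzPDF_eq_partialMoment hα.ne' hβ.ne' hx.1
  have hg₀ : ∀ x ∈ Ioo (0 : ℝ) 1, g x ≠ 0 := fun x hx h =>
    (unitGompertzPartialMoment_pos (β := β) hα hx.1).ne' (by rw [← hgM x hx, h, zero_mul])
  have hcont : ∀ x ∈ Ioo (0 : ℝ) 1, ContinuousAt (fun t => t * f t) x := fun x hx =>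
    continuousAt_id.mul (hf_diff x hx).continuousAt
  have hmoment : ∀ x ∈ Ioo (0 : ℝ) 1,
      HasDerivAt (fun y => ∫ t in (0 : ℝ)..y, t * f t) (x * f x) x := fun x hx =>
    intervalIntegral.integral_hasDerivAt_right (hint x hx)
      (ContinuousOn.stronglyMeasurableAtFilter isOpen_Ioo
        (fun y hy => (hcont y hy).continuousWithinAt) x hx) (hcont x hx)
  obtain ⟨c, hc⟩ := isOpen_Ioo.exists_eq_const_mul_of_deriv_mul_eq isPreconnected_Ioo hmoment
    (fun x hx => hasDerivAt_unitGompertzPartialMoment hα hβ.ne' hx.1)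
    (fun x hx => (unitGompertzPartialMoment_pos hα hx.1).ne')
    (fun x hx => by rw [hid x hx, ← hgM x hx]; ring)
  have hf : ∀ x ∈ Ioo (0 : ℝ) 1, f x = c * unitGompertzPDF α β x := fun x hx =>
    mul_left_cancel₀ (hg₀ x hx) (by rw [← hid x hx, hc x hx, ← hgM x hx]; ring)
  have hc₁ : c = 1 := by
    have h := integral_unitGompertzPDF hα hβ
    rw [intervalIntegral.integral_of_le zero_le_one, integral_Ioc_eq_integral_Ioo] at h hf_int
    rwa [setIntegral_congr_fun measurableSet_Ioo hf, integral_const_mul, h, mul_one] at hf_int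
  intro x hx
  rw [hf x hx, hc₁, one_mul, unitGompertzPDF]

/-- **Theorem 1, converse part.** Let `α, β > 0` and
`g x = (α^(1/β) / (α * β)) * exp (α / x^β) * x^(1+β) * Γ(1 - 1/β; α / x^β)`.
If `f` is a positive differentiable function on `(0, 1)` integrating to `1`
(with `t * f t` integrable near `0`) such that
`∫ t in 0..x, t * f t = g x * f x` for every `x ∈ (0, 1)`, then `f` is the
unit-Gompertz density: `f x = α * β * exp (-α * (x^(-β) - 1)) / x^(1+β)` on `(0, 1)`. -/
theorem unitGompertz_characterization_left (α β : ℝ) (hα : 0 < α) (hβ : 0 < β)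
    (g f : ℝ → ℝ)
    (hg : g = fun x => α ^ (1 / β) / (α * β) * Real.exp (α / x ^ β) * x ^ (1 + β) *
      uiGamma (1 - 1 / β) (α / x ^ β))
    (hf_pos : ∀ x ∈ Set.Ioo (0:ℝ) 1, 0 < f x)
    (hf_diff : ∀ x ∈ Set.Ioo (0:ℝ) 1, DifferentiableAt ℝ f x)
    (hf_int : (∫ t in (0:ℝ)..1, f t) = 1)
    (hint : ∀ x ∈ Set.Ioo (0:ℝ) 1,
      IntervalIntegrable (fun t => t * f t) MeasureTheory.volume 0 x)
    (hid : ∀ x ∈ Set.Ioo (0:ℝ) 1, (∫ t in (0:ℝ)..x, t * f t) = g x * f x) :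
    ∀ x ∈ Set.Ioo (0:ℝ) 1,
      f x = α * β * Real.exp (-α * (x ^ (-β) - 1)) / x ^ (1 + β) :=
  unitGompertz_characterization_left_general α β hα hβ g f hg hf_diff hf_int hint hid
end

section
/- Let α > 0 and β > 0, and let f(x) = αβ·exp(−α(x^{−β} − 1))/x^{1+β} for x ∈ (0,1). Define h(x) = (α^{1/β}/(αβ))·exp(α/x^β)·x^{1+β}·[Γ(1 − 1/β; α) − Γ(1 − 1/β; α/x^β)]. Then for every x ∈ (0,1), ∫_x^1 t·f(t) dt = h(x)·f(x); equivalently, with F(x) = exp(−α(x^{−β} − 1)), the conditional expectation satisfies E(X | X ≥ x) = h(x)·f(x)/(1 − F(x)) when X has density f. -/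
open Real MeasureTheory Set

/-!
Under the substitution `u = α t^(-β)` one has `t f(t) dt = -α^(1/β) e^α u^(-1/β) e^(-u) du`, so
`∫_x^1 t f(t) dt = α^(1/β) e^α ∫_α^(α/x^β) u^(-1/β) e^(-u) du`, a difference of two upper
incomplete gamma values. On the other side `e^(α/x^β) f(x)` is `αβ e^α / x^(1+β)`, so `h(x) f(x)`
is the same quantity.
-/

noncomputable def unitGompertzDensity (α β x : ℝ) : ℝ :=
  α * β * exp (-α * (x ^ (-β) - 1)) / x ^ (1 + β)

lemma integrableOn_rpow_mul_exp_neg_Ioi {s a : ℝ} (ha : 0 < a) :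
    IntegrableOn (fun t => t ^ (s - 1) * exp (-t)) (Ioi a) := by
  refine integrable_of_isBigO_exp_neg (b := 1 / 2) (by norm_num) ?_ ?_
  · refine ContinuousOn.mul (fun t ht => ?_) (continuous_exp.comp continuous_neg).continuousOn
    exact (continuousAt_rpow_const t _ (Or.inl (ha.trans_le ht).ne')).continuousWithinAt
  · exact (Gamma_integrand_isLittleO (s - 1)).isBigO.congr_left fun t => mul_comm _ _

lemma uiGamma_sub_uiGamma (s : ℝ) {a b : ℝ} (ha : 0 < a) (hb : 0 < b) :
    uiGamma s a - uiGamma s b = ∫ u in a..b, u ^ (s - 1) * exp (-u) :=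
  intervalIntegral.integral_Ioi_sub_Ioi' (integrableOn_rpow_mul_exp_neg_Ioi ha)
    (integrableOn_rpow_mul_exp_neg_Ioi hb)

section UnitGompertz

variable {α β : ℝ}

lemma mul_unitGompertzDensity_eq (hα : 0 < α) (hβ : β ≠ 0) {t : ℝ} (ht : 0 < t) :
    t * unitGompertzDensity α β t =
      -(α ^ (1 / β) * exp α) *
        ((α * t ^ (-β)) ^ (-(1 / β)) * exp (-(α * t ^ (-β))) * (α * (-β * t ^ (-β - 1)))) := by
  have hpow : (α * t ^ (-β)) ^ (-(1 / β)) = (α ^ (1 / β))⁻¹ * t := by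
    rw [mul_rpow hα.le (rpow_nonneg ht.le _), ← rpow_mul ht.le,
      show -β * -(1 / β) = 1 by field_simp, rpow_one, rpow_neg hα.le]
  have hexp : exp (-α * (t ^ (-β) - 1)) = exp α * exp (-(α * t ^ (-β))) := by
    rw [← exp_add]; ring_nf
  rw [unitGompertzDensity, hpow, hexp, show -β - 1 = -(1 + β) by ring, rpow_neg ht.le (1 + β)]
  field_simp

lemma integral_mul_unitGompertzDensity (hα : 0 < α) (hβ : β ≠ 0) {a b : ℝ} (ha : 0 < a)
    (hb : 0 < b) :
    ∫ t in a..b, t * unitGompertzDensity α β t =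
      α ^ (1 / β) * exp α * ∫ u in α * b ^ (-β)..α * a ^ (-β), u ^ (-(1 / β)) * exp (-u) := by
  have hpos : ∀ t ∈ uIcc a b, 0 < t := fun t ht => (lt_min ha hb).trans_le ht.1
  have hφ : ∀ t ∈ uIcc a b, HasDerivAt (fun t => α * t ^ (-β)) (α * (-β * t ^ (-β - 1))) t :=
    fun t ht => (hasDerivAt_rpow_const (Or.inl (hpos t ht).ne')).const_mul α
  have hφ' : ContinuousOn (fun t => α * (-β * t ^ (-β - 1))) (uIcc a b) :=
    continuousOn_const.mul <| continuousOn_const.mul fun t ht =>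
      (continuousAt_rpow_const t _ (Or.inl (hpos t ht).ne')).continuousWithinAt
  have hg : ContinuousOn (fun u => u ^ (-(1 / β)) * exp (-u))
      ((fun t => α * t ^ (-β)) '' uIcc a b) := by
    rintro _ ⟨t, ht, rfl⟩
    have hu : 0 < α * t ^ (-β) := mul_pos hα (rpow_pos_of_pos (hpos t ht) _)
    exact ((continuousAt_rpow_const _ _ (Or.inl hu.ne')).mul
      (continuous_exp.comp continuous_neg).continuousAt).continuousWithinAt
  have hsubst := intervalIntegral.integral_comp_mul_deriv' hφ hφ' hg
  simp only [Function.comp_apply] at hsubst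
  rw [intervalIntegral.integral_congr fun t ht => mul_unitGompertzDensity_eq hα hβ (hpos t ht),
    intervalIntegral.integral_const_mul, hsubst, intervalIntegral.integral_symm]
  ring

end UnitGompertz

theorem unitGompertz_right_truncated_identity_general (α β : ℝ) (hα : 0 < α) (hβ : 0 < β)
    (f h F : ℝ → ℝ)
    (hf : f = fun x => α * β * Real.exp (-α * (x ^ (-β) - 1)) / x ^ (1 + β))
    (hh : h = fun x => α ^ (1 / β) / (α * β) * Real.exp (α / x ^ β) * x ^ (1 + β) *
      (uiGamma (1 - 1 / β) α - uiGamma (1 - 1 / β) (α / x ^ β))) :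
    ∀ x ∈ Set.Ioo (0:ℝ) 1,
      (∫ t in x..(1:ℝ), t * f t) = h x * f x ∧
      (∫ t in x..(1:ℝ), t * f t) / (1 - F x) = h x * f x / (1 - F x) := by
  rintro x ⟨hx, -⟩
  have hdensity : f = unitGompertzDensity α β := hf
  have hxβ : 0 < x ^ β := rpow_pos_of_pos hx β
  have hintegral : ∫ t in x..1, t * f t = α ^ (1 / β) * exp α *
      (uiGamma (1 - 1 / β) α - uiGamma (1 - 1 / β) (α / x ^ β)) := by
    rw [hdensity, integral_mul_unitGompertzDensity hα hβ.ne' hx one_pos, one_rpow, mul_one,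
      uiGamma_sub_uiGamma _ hα (div_pos hα hxβ), rpow_neg hx.le, ← div_eq_mul_inv,
      show 1 - 1 / β - 1 = -(1 / β) by ring]
  have hexp : exp (α / x ^ β) * exp (-α * (x ^ (-β) - 1)) = exp α := by
    rw [← exp_add, rpow_neg hx.le]; ring_nf
  have hproduct : h x * f x = α ^ (1 / β) * exp α *
      (uiGamma (1 - 1 / β) α - uiGamma (1 - 1 / β) (α / x ^ β)) := by
    rw [hh, hdensity, unitGompertzDensity, ← hexp]
    field_simp
  rw [hintegral, hproduct]
  exact ⟨rfl, rfl⟩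

/-- **Theorem 2, direct part.** For `α, β > 0`, the unit-Gompertz density
`f x = α * β * exp (-α * (x ^ (-β) - 1)) / x ^ (1 + β)` and the function
`h x = (α^(1/β) / (α * β)) * exp (α / x^β) * x^(1+β) *
  (Γ(1 - 1/β; α) - Γ(1 - 1/β; α / x^β))`
satisfy `∫ t in x..1, t * f t = h x * f x` for every `x ∈ (0, 1)`; equivalently,
with `F x = exp (-α * (x ^ (-β) - 1))`, the conditional expectation satisfies
`E(X | X ≥ x) = h x * f x / (1 - F x)`. -/
theorem unitGompertz_right_truncated_identity (α β : ℝ) (hα : 0 < α) (hβ : 0 < β)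
    (f h F : ℝ → ℝ)
    (hf : f = fun x => α * β * Real.exp (-α * (x ^ (-β) - 1)) / x ^ (1 + β))
    (hh : h = fun x => α ^ (1 / β) / (α * β) * Real.exp (α / x ^ β) * x ^ (1 + β) *
      (uiGamma (1 - 1 / β) α - uiGamma (1 - 1 / β) (α / x ^ β)))
    (hF : F = fun x => Real.exp (-α * (x ^ (-β) - 1))) :
    ∀ x ∈ Set.Ioo (0:ℝ) 1,
      (∫ t in x..(1:ℝ), t * f t) = h x * f x ∧
      (∫ t in x..(1:ℝ), t * f t) / (1 - F x) = h x * f x / (1 - F x) :=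
  unitGompertz_right_truncated_identity_general α β hα hβ f h F hf hh
end

section
/- Let α > 0 and β > 0, and let X be a random variable with density f(x) = αβ·exp(−α(x^{−β} − 1))/x^{1+β} on (0,1). Then the first L-moment (the mean) is λ_1 = E(X) = ∫_0^1 x·f(x) dx = e^α·α^{1/β}·Γ(1 − 1/β; α), where Γ(s; y) = ∫_y^∞ t^{s−1} e^{−t} dt is the upper incomplete gamma function. -/
/-!
Substituting `t = α x^(-β)` maps `(0, 1)` decreasingly onto `(α, ∞)` with `|dt| = α β x^(-β-1) dx`,
and `x = (t / α)^(-1/β)`; so `x f(x) dx` becomes `e^α α^(1/β) t^(-1/β) e^(-t) dt`, the integrand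
of `Γ(1 - 1/β; α)`.
-/

open Set MeasureTheory

section RpowNegSubstitution

variable {a b : ℝ}

theorem strictAntiOn_const_mul_rpow_neg (ha : 0 < a) (hb : 0 < b) :
    StrictAntiOn (fun x : ℝ => a * x ^ (-b)) (Ioi 0) := fun _ hx _ _ hxy =>
  mul_lt_mul_of_pos_left (Real.rpow_lt_rpow_of_neg hx hxy (neg_neg_iff_pos.mpr hb)) ha

theorem image_const_mul_rpow_neg_Ioo (ha : 0 < a) (hb : 0 < b) :
    (fun x : ℝ => a * x ^ (-b)) '' Ioo 0 1 = Ioi a := by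
  ext t
  constructor
  · rintro ⟨x, hx, rfl⟩
    have h1 : 1 < x ^ (-b) :=
      (Real.one_lt_rpow_iff_of_pos hx.1).mpr (Or.inr ⟨hx.2, neg_neg_iff_pos.mpr hb⟩)
    simpa using mul_lt_mul_of_pos_left h1 ha
  · intro (hat : a < t)
    have hq : 0 < a / t := div_pos ha (ha.trans hat)
    refine ⟨(a / t) ^ (1 / b), ⟨Real.rpow_pos_of_pos hq _, ?_⟩, ?_⟩
    · exact Real.rpow_lt_one hq.le ((div_lt_one (ha.trans hat)).mpr hat) (one_div_pos.mpr hb)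
    · have hexp : 1 / b * -b = -1 := by field_simp
      show a * ((a / t) ^ (1 / b)) ^ (-b) = t
      rw [← Real.rpow_mul hq.le, hexp, Real.rpow_neg_one, inv_div]
      field_simp

theorem integral_Ioi_eq_integral_Ioo_comp_const_mul_rpow_neg {E : Type*} [NormedAddCommGroup E]
    [NormedSpace ℝ E] (ha : 0 < a) (hb : 0 < b) (g : ℝ → E) :
    ∫ t in Ioi a, g t = ∫ x in Ioo 0 1, (a * b * x ^ (-b - 1)) • g (a * x ^ (-b)) := by
  have hderiv : ∀ x ∈ Ioo (0 : ℝ) 1, HasDerivWithinAt (fun x : ℝ => a * x ^ (-b))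
      (a * (-b * x ^ (-b - 1))) (Ioo 0 1) x := fun x hx =>
    ((Real.hasDerivAt_rpow_const (Or.inl hx.1.ne')).const_mul a).hasDerivWithinAt
  have hinj : InjOn (fun x : ℝ => a * x ^ (-b)) (Ioo 0 1) :=
    (strictAntiOn_const_mul_rpow_neg ha hb).injOn.mono Ioo_subset_Ioi_self
  rw [← image_const_mul_rpow_neg_Ioo ha hb,
    integral_image_eq_integral_abs_deriv_smul measurableSet_Ioo hderiv hinj]
  refine setIntegral_congr_fun measurableSet_Ioo fun x hx => ?_
  have hpos : 0 < a * (b * x ^ (-b - 1)) := by have := hx.1; positivity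
  rw [neg_mul, mul_neg, abs_neg, abs_of_pos hpos, mul_assoc]

end RpowNegSubstitution

theorem mul_unitGompertz_density_eq {α β x : ℝ} (hα : 0 < α) (hβ : 0 < β) (hx : 0 < x) :
    x * (α * β * Real.exp (-α * (x ^ (-β) - 1)) / x ^ (1 + β)) =
      Real.exp α * α ^ (1 / β) * ((α * β * x ^ (-β - 1)) *
        ((α * x ^ (-β)) ^ (1 - 1 / β - 1) * Real.exp (-(α * x ^ (-β))))) := by
  have hpow : (α * x ^ (-β)) ^ (1 - 1 / β - 1) = α ^ (-(1 / β)) * x := by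
    have hexp : -β * -(1 / β) = 1 := by field_simp
    rw [sub_sub_cancel_left, Real.mul_rpow hα.le (by positivity), ← Real.rpow_mul hx.le, hexp,
      Real.rpow_one]
  have hα_pow : α ^ (1 / β) * α ^ (-(1 / β)) = 1 := by
    rw [← Real.rpow_add hα, add_neg_cancel, Real.rpow_zero]
  have hx_div : x / x ^ (1 + β) = x ^ (-β) := by
    rw [Real.rpow_add hx, Real.rpow_one, Real.rpow_neg hx.le]
    field_simp
  have hx_mul : x ^ (-β - 1) * x = x ^ (-β) := by
    rw [Real.rpow_sub hx, Real.rpow_one]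
    field_simp
  have hexp : Real.exp (-α * (x ^ (-β) - 1)) = Real.exp α * Real.exp (-(α * x ^ (-β))) := by
    rw [← Real.exp_add]; ring_nf
  calc x * (α * β * Real.exp (-α * (x ^ (-β) - 1)) / x ^ (1 + β))
      = α * β * Real.exp α * Real.exp (-(α * x ^ (-β))) * (x / x ^ (1 + β)) := by
        rw [hexp]; ring
    _ = _ := by
        rw [hpow, hx_div]
        linear_combination (-(α * β * Real.exp α * Real.exp (-(α * x ^ (-β))))) * hx_mul -
          α * β * Real.exp α * Real.exp (-(α * x ^ (-β))) * (x ^ (-β - 1) * x) * hα_pow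

/-- **Mean (first L-moment) of the unit-Gompertz distribution.**
For `α, β > 0`, with density `f x = α * β * exp (-α * (x ^ (-β) - 1)) / x ^ (1 + β)`
on `(0, 1)`, the mean is `λ₁ = ∫_0^1 x * f x dx = e^α * α^(1/β) * Γ(1 - 1/β; α)`. -/
theorem unitGompertz_mean (α β : ℝ) (hα : 0 < α) (hβ : 0 < β)
    (f : ℝ → ℝ)
    (hf : f = fun x => α * β * Real.exp (-α * (x ^ (-β) - 1)) / x ^ (1 + β)) :
    (∫ x in (0:ℝ)..1, x * f x) =
      Real.exp α * α ^ (1 / β) * uiGamma (1 - 1 / β) α := by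
  subst hf
  rw [uiGamma, integral_Ioi_eq_integral_Ioo_comp_const_mul_rpow_neg hα hβ, ← integral_const_mul,
    intervalIntegral.integral_of_le zero_le_one, integral_Ioc_eq_integral_Ioo]
  exact setIntegral_congr_fun measurableSet_Ioo fun x hx =>
    mul_unitGompertz_density_eq hα hβ hx.1
end
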